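/- arXiv:2011.05387 — 4 statements merged into one kernel-verified Lean document; each statement's English description precedes it below -/
import Mathlib

section
/- Let p be a prime and let f ∈ ℤ_p[X] be a nonzero polynomial of the form f = p^μ · h, where μ is a nonnegative integer and h is a distinguished polynomial. Let r be the largest integer such that X^r divides f, and write f = X^r · g (so g(0) ≠ 0). Then the constant term g(0) is a unit of ℤ_p if and only if μ = 0 and the degree of f equals r. -/
/-- For a nonzero polynomial `f = p^μ * h` over `ℤ_[p]` with `h`
distinguished, writing `f = X^r * g` with `g(0) ≠ 0` (so that `r` is the largest
power of `X` dividing `f`), the constant term `g(0)` is a unit of `ℤ_[p]` if and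
only if `μ = 0` and `deg f = r`. -/
theorem unit_constant_term_iff_mu_zero_and_lambda_eq_r
    (p : ℕ) [Fact p.Prime] (f h g : Polynomial ℤ_[p]) (μ r : ℕ)
    (hf : f = (p : Polynomial ℤ_[p]) ^ μ * h)
    (hmonic : h.Monic)
    (hdist : ∀ i < h.natDegree, (p : ℤ_[p]) ∣ h.coeff i)
    (hfne : f ≠ 0)
    (hfactor : f = Polynomial.X ^ r * g)
    (hg0 : g.coeff 0 ≠ 0) :
    IsUnit (g.coeff 0) ↔ μ = 0 ∧ f.natDegree = r := by
  have hpnu : ¬ IsUnit (p : ℤ_[p]) := (PadicInt.irreducible_p).not_isUnit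
  have hpC : (p : Polynomial ℤ_[p]) = Polynomial.C (p : ℤ_[p]) := by simp
  have hcoeff : f.coeff r = g.coeff 0 := by
    rw [hfactor]
    simpa using Polynomial.coeff_X_pow_mul g r 0
  have hgne : g ≠ 0 := fun hg => hg0 (by simp [hg])
  have hdegf : f.natDegree = r + g.natDegree := by
    rw [hfactor, Polynomial.natDegree_mul (pow_ne_zero _ Polynomial.X_ne_zero) hgne,
      Polynomial.natDegree_X_pow]
  constructor
  · intro hu
    have h1 : f.coeff r = (p : ℤ_[p]) ^ μ * h.coeff r := by
      rw [hf, hpC, ← Polynomial.C_pow, Polynomial.coeff_C_mul]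
    rw [hcoeff] at h1
    have hu' : IsUnit ((p : ℤ_[p]) ^ μ * h.coeff r) := h1 ▸ hu
    have hμ : μ = 0 := by
      by_contra hne
      exact hpnu (isUnit_of_dvd_unit
        (dvd_mul_of_dvd_left (dvd_pow_self _ hne) _) hu')
    subst hμ
    refine ⟨rfl, ?_⟩
    simp only [pow_zero, one_mul] at hf hu'
    have hle : h.natDegree ≤ r := by
      by_contra hlt
      push_neg at hlt
      exact hpnu (isUnit_of_dvd_unit (hdist r hlt) hu')
    have hfh : f.natDegree = h.natDegree := by rw [hf]
    omega
  · rintro ⟨hμ, hdeg⟩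
    subst hμ
    simp only [pow_zero, one_mul] at hf
    have : g.coeff 0 = f.leadingCoeff := by
      rw [Polynomial.leadingCoeff, hdeg, hcoeff]
    rw [this, hf, hmonic.leadingCoeff]
    exact isUnit_one
end

section
/- Let p be a prime, Λ = ℤ_p[[T]], and let f ∈ Λ be nonzero. Multiplication by T on the quotient module Λ/(f) is injective if and only if the constant coefficient f(0) is nonzero. -/
/-!
If `f(0) = 0`, write `f = T g`: then `T g ≡ 0` modulo `f` while `g ≢ 0`, because `f ∣ g` would
force `ord_T f ≤ ord_T g < ord_T f`. If `f(0) ≠ 0` and `T a = f q`, comparing constant terms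
gives `q(0) = 0`, so `q = T q'` and cancelling `T` leaves `a = f q'`.
-/

namespace PowerSeries

theorem not_X_mul_dvd_self {R : Type*} [Semiring R] {g : R⟦X⟧} (hg : g ≠ 0) : ¬X * g ∣ g := by
  rintro ⟨c, hc⟩
  have h_order : order g + 1 ≤ order g :=
    calc order g + 1 ≤ order X + order g := by
          rw [add_comm]
          exact add_le_add_left (one_le_order_iff_constCoeff_eq_zero.mpr constantCoeff_X) _
      _ ≤ order (X * g) := le_order_mul X g
      _ ≤ order (X * g) + order c := le_self_add
      _ ≤ order g := (le_order_mul (X * g) c).trans_eq (by rw [← hc])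
  exact lt_irrefl _ ((ENat.add_one_le_iff (order_eq_top.not.mpr hg)).mp h_order)

theorem dvd_of_dvd_X_mul {R : Type*} [CommSemiring R] {f a : R⟦X⟧}
    (hf : IsLeftRegular (constantCoeff f)) (h : f ∣ X * a) : f ∣ a := by
  obtain ⟨q, hq⟩ := h
  have hq0 : constantCoeff q = 0 :=
    hf (by simpa using (congrArg constantCoeff hq).symm)
  obtain ⟨q', rfl⟩ := X_dvd_iff.mpr hq0
  exact ⟨q', X_mul_cancel (by rw [hq]; ring)⟩

end PowerSeries

/-- For nonzero `f ∈ Λ = ℤ_[p][[T]]`, multiplication by `T` on the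
quotient module `Λ/(f)` is injective if and only if the constant coefficient
`f(0)` is nonzero. -/
theorem mul_X_injective_on_quotient_iff_constantCoeff_ne_zero
    (p : ℕ) [Fact p.Prime] (f : PowerSeries ℤ_[p]) (hf : f ≠ 0) :
    Function.Injective
        (fun m : PowerSeries ℤ_[p] ⧸ Ideal.span {f} =>
          (PowerSeries.X : PowerSeries ℤ_[p]) • m) ↔
      PowerSeries.constantCoeff f ≠ 0 := by
  change IsSMulRegular _ _ ↔ _
  simp only [isSMulRegular_quotient_iff_mem_of_smul_mem, smul_eq_mul, Ideal.mem_span_singleton]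
  constructor
  · intro h hf0
    obtain ⟨g, rfl⟩ := PowerSeries.X_dvd_iff.mpr hf0
    exact PowerSeries.not_X_mul_dvd_self (right_ne_zero_of_mul hf) (h g dvd_rfl)
  · exact fun hf0 a => PowerSeries.dvd_of_dvd_X_mul (IsRegular.of_ne_zero hf0).left
end

section
/- Let p be a prime, Λ = ℤ_p[[T]], and let f ∈ Λ be a nonzero power series that is not divisible by T². Set X = Λ/(f). Then the natural ℤ_p-linear map from the kernel of multiplication by T on X to the coinvariants X/TX, sending an element to its residue class, has finite kernel and finite cokernel. -/
/-!
Let `X = Λ/(f)`. An element of `X[T] ∩ TX` is the class of some `Tg` with `f ∣ T²g`; since `T`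
is prime and `T² ∤ f`, already `f ∣ Tg`, so the map is injective. Its cokernel is
`X/(TX + X[T]) = Λ/(f, T, h)`, where `h = f/T` if `T ∣ f` and `h = f` otherwise. Then `Th ∈ (f)`
and `T ∤ h`, so the cokernel is a quotient of `Λ/(T, h) ≅ ℤ_p/(h(0))` with `h(0) ≠ 0`, which is
finite.
-/

open PowerSeries

instance PadicInt.hasFiniteQuotients (p : ℕ) [Fact p.Prime] :
    Ring.HasFiniteQuotients ℤ_[p] where
  finiteQuotient {I} hI := by
    obtain ⟨n, rfl⟩ := PadicInt.ideal_eq_span_pow_p hI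
    rw [← PadicInt.ker_toZModPow n]
    have : NeZero (p ^ n) := ⟨pow_ne_zero n (Fact.out : p.Prime).ne_zero⟩
    exact .of_equiv _
      (RingHom.quotientKerEquivOfSurjective (ZMod.ringHom_surjective _)).symm.toEquiv

section Divisibility

variable {α : Type*}

theorem exists_not_dvd_and_dvd_mul_of_not_sq_dvd [CommMonoid α] {q f : α} (hf : ¬ q ^ 2 ∣ f) :
    ∃ h, ¬ q ∣ h ∧ f ∣ q * h := by
  by_cases hqf : q ∣ f
  · obtain ⟨h, rfl⟩ := hqf
    exact ⟨h, fun ⟨k, hk⟩ => hf ⟨k, by rw [hk, pow_two, mul_assoc]⟩, dvd_rfl⟩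
  · exact ⟨f, hqf, dvd_mul_left _ _⟩

theorem Prime.dvd_mul_of_dvd_mul_mul_of_not_sq_dvd [CommMonoidWithZero α] [IsCancelMulZero α]
    {q f g : α} (hq : Prime q) (hf : ¬ q ^ 2 ∣ f) (h : f ∣ q * (q * g)) : f ∣ q * g := by
  rcases hq.left_dvd_or_dvd_right_of_dvd_mul h with ⟨f', rfl⟩ | hfg
  · have hf' : ¬ q ∣ f' := fun ⟨k, hk⟩ => hf ⟨k, by rw [hk, pow_two, mul_assoc]⟩
    have hf'g := (hq.left_dvd_or_dvd_right_of_dvd_mul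
      ((mul_dvd_mul_iff_left hq.ne_zero).1 h)).resolve_left hf'
    exact mul_dvd_mul_left q hf'g
  · exact hfg

end Divisibility

namespace PowerSeries

variable {R : Type*} [CommRing R]

theorem sub_C_constantCoeff_mem_of_X_mem {I : Ideal R⟦X⟧} (hX : X ∈ I) (a : R⟦X⟧) :
    a - C (constantCoeff a) ∈ I :=
  I.mem_of_dvd (X_dvd_iff.2 (by simp)) hX

theorem finite_quotient_of_X_mem [Ring.HasFiniteQuotients R] {I : Ideal R⟦X⟧} (hX : X ∈ I)
    {h : R⟦X⟧} (hhI : h ∈ I) (hh : constantCoeff h ≠ 0) : Finite (R⟦X⟧ ⧸ I) := by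
  have hne : I.comap C ≠ ⊥ := by
    refine fun hbot => hh ?_
    have : C (constantCoeff h) ∈ I := by
      simpa using I.sub_mem hhI (sub_C_constantCoeff_mem_of_X_mem hX h)
    simpa [hbot] using (show constantCoeff h ∈ I.comap C from this)
  have := Ring.HasFiniteQuotients.finiteQuotient hne
  refine .of_surjective (Ideal.quotientMap I C le_rfl) fun y => ?_
  obtain ⟨a, rfl⟩ := Ideal.Quotient.mk_surjective y
  refine ⟨Ideal.Quotient.mk _ (constantCoeff a), ?_⟩
  rw [Ideal.quotientMap_mk, Ideal.Quotient.eq]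
  simpa using I.neg_mem (sub_C_constantCoeff_mem_of_X_mem hX a)

end PowerSeries

namespace Submodule

variable {R M : Type*} [Ring R] [AddCommGroup M] [Module R M]

theorem ker_mkQ_comp_subtype_eq_bot {N P : Submodule R M} (h : Disjoint N P) :
    LinearMap.ker (P.mkQ ∘ₗ N.subtype) = ⊥ := by
  rwa [LinearMap.ker_comp, ker_mkQ, ← disjoint_iff_comap_eq_bot]

theorem range_mkQ_comp_subtype (N P : Submodule R M) :
    LinearMap.range (P.mkQ ∘ₗ N.subtype) = N.map P.mkQ := by
  rw [LinearMap.range_comp, range_subtype]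

end Submodule

theorem Ideal.Quotient.smul_mk {R : Type*} [CommRing R] (I : Ideal R) (a g : R) :
    a • Ideal.Quotient.mk I g = Ideal.Quotient.mk I (a * g) :=
  rfl

theorem disjoint_ker_range_lsmul_of_not_sq_dvd {R : Type*} [CommRing R] [IsDomain R] {a f : R}
    (ha : Prime a) (hf : ¬ a ^ 2 ∣ f) :
    Disjoint (LinearMap.ker (LinearMap.lsmul R (R ⧸ Ideal.span {f}) a))
      (LinearMap.range (LinearMap.lsmul R (R ⧸ Ideal.span {f}) a)) := by
  rw [Submodule.disjoint_def]
  rintro _ hker ⟨y, rfl⟩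
  obtain ⟨g, rfl⟩ := Ideal.Quotient.mk_surjective y
  simp only [LinearMap.mem_ker, LinearMap.lsmul_apply, Ideal.Quotient.smul_mk,
    Ideal.Quotient.eq_zero_iff_mem, Ideal.mem_span_singleton] at hker ⊢
  exact ha.dvd_mul_of_dvd_mul_mul_of_not_sq_dvd hf hker

theorem PowerSeries.finite_quotient_ker_sup_range_lsmul_X {R : Type*} [CommRing R]
    [Ring.HasFiniteQuotients R] {f : R⟦X⟧} (hf : ¬ X ^ 2 ∣ f) :
    Finite ((R⟦X⟧ ⧸ Ideal.span {f}) ⧸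
      (LinearMap.range (LinearMap.lsmul R⟦X⟧ (R⟦X⟧ ⧸ Ideal.span {f}) X) ⊔
        LinearMap.ker (LinearMap.lsmul R⟦X⟧ (R⟦X⟧ ⧸ Ideal.span {f}) X))) := by
  set φ := LinearMap.lsmul R⟦X⟧ (R⟦X⟧ ⧸ Ideal.span {f}) X
  obtain ⟨h, hXh, hfh⟩ := exists_not_dvd_and_dvd_mul_of_not_sq_dvd hf
  let π := (LinearMap.range φ ⊔ LinearMap.ker φ).mkQ ∘ₗ (Ideal.span {f}).mkQ
  have hπ : Function.Surjective π :=
    (Submodule.mkQ_surjective _).comp (Submodule.mkQ_surjective _)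
  have hX : X ∈ LinearMap.ker π := by
    refine (Submodule.Quotient.mk_eq_zero _).2
      (Submodule.mem_sup_left ⟨Ideal.Quotient.mk _ 1, ?_⟩)
    rw [LinearMap.lsmul_apply, Ideal.Quotient.smul_mk, mul_one]
    rfl
  have hh : h ∈ LinearMap.ker π := (Submodule.Quotient.mk_eq_zero _).2
    (Submodule.mem_sup_right (Ideal.Quotient.eq_zero_iff_mem.2 (Ideal.mem_span_singleton.2 hfh)))
  have := finite_quotient_of_X_mem hX hh (fun h0 => hXh (X_dvd_iff.2 h0))
  exact .of_equiv _ (π.quotKerEquivOfSurjective hπ).toEquiv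

theorem truncated_euler_char_defined_of_sq_not_dvd_general
    (p : ℕ) [Fact p.Prime] (f : PowerSeries ℤ_[p])
    (hsq : ¬ (PowerSeries.X : PowerSeries ℤ_[p]) ^ 2 ∣ f)
    (φ : (PowerSeries ℤ_[p] ⧸ Ideal.span {f}) →ₗ[PowerSeries ℤ_[p]]
        (PowerSeries ℤ_[p] ⧸ Ideal.span {f}))
    (hφ : φ = LinearMap.lsmul (PowerSeries ℤ_[p]) (PowerSeries ℤ_[p] ⧸ Ideal.span {f})
        (PowerSeries.X : PowerSeries ℤ_[p]))
    (ψ : LinearMap.ker φ →ₗ[PowerSeries ℤ_[p]]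
        ((PowerSeries ℤ_[p] ⧸ Ideal.span {f}) ⧸ LinearMap.range φ))
    (hψ : ψ = (LinearMap.range φ).mkQ.comp (LinearMap.ker φ).subtype) :
    Finite (LinearMap.ker ψ) ∧
      Finite (((PowerSeries ℤ_[p] ⧸ Ideal.span {f}) ⧸ LinearMap.range φ) ⧸
        LinearMap.range ψ) := by
  subst hφ hψ
  constructor
  · rw [Submodule.ker_mkQ_comp_subtype_eq_bot (disjoint_ker_range_lsmul_of_not_sq_dvd X_prime hsq)]
    infer_instance
  · rw [Submodule.range_mkQ_comp_subtype]
    have := finite_quotient_ker_sup_range_lsmul_X hsq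
    exact .of_equiv _ (Submodule.quotientQuotientEquivQuotientSup _ _).symm.toEquiv

/-- Let `f ∈ Λ = ℤ_[p][[T]]` be nonzero with `T² ∤ f`, and set
`X = Λ/(f)`. The natural map from the kernel of multiplication by `T` on `X` to
the coinvariants `X/TX`, sending an element to its residue class, has finite
kernel and finite cokernel. -/
theorem truncated_euler_char_defined_of_sq_not_dvd
    (p : ℕ) [Fact p.Prime] (f : PowerSeries ℤ_[p]) (hf : f ≠ 0)
    (hsq : ¬ (PowerSeries.X : PowerSeries ℤ_[p]) ^ 2 ∣ f)
    (φ : (PowerSeries ℤ_[p] ⧸ Ideal.span {f}) →ₗ[PowerSeries ℤ_[p]]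
        (PowerSeries ℤ_[p] ⧸ Ideal.span {f}))
    (hφ : φ = LinearMap.lsmul (PowerSeries ℤ_[p]) (PowerSeries ℤ_[p] ⧸ Ideal.span {f})
        (PowerSeries.X : PowerSeries ℤ_[p]))
    (ψ : LinearMap.ker φ →ₗ[PowerSeries ℤ_[p]]
        ((PowerSeries ℤ_[p] ⧸ Ideal.span {f}) ⧸ LinearMap.range φ))
    (hψ : ψ = (LinearMap.range φ).mkQ.comp (LinearMap.ker φ).subtype) :
    Finite (LinearMap.ker ψ) ∧
      Finite (((PowerSeries ℤ_[p] ⧸ Ideal.span {f}) ⧸ LinearMap.range φ) ⧸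
        LinearMap.range ψ) :=
  truncated_euler_char_defined_of_sq_not_dvd_general p f hsq φ hφ ψ hψ
end

section
/- Let p be a prime, Λ = ℤ_p[[T]], and let f ∈ Λ be nonzero with T² not dividing f. Write f = T^r · g where r ∈ {0, 1} and the constant coefficient g(0) is nonzero. Set X = Λ/(f). Then the natural map from the kernel of multiplication by T on X to the coinvariants X/TX (sending an element to its residue class) is injective, and its cokernel is a finite group of cardinality p^{v_p(g(0))}, where v_p denotes the p-adic valuation on ℤ_p. -/
/-! On `X = Λ/(T^r g)` multiplication by `T` has image `(T)/(f)` and, because `T` is a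
non-zero-divisor on `Λ` and `g` is one modulo `T` (as `g(0) ≠ 0`), kernel `(g)/(f)`; for `r ≤ 1`
these meet trivially. Hence `ker T → X/TX` is injective with cokernel
`X/((T) + (g)) = Λ/(T, g) ≅ ℤ_p/(g(0))`, a group with `p^{v_p(g(0))}` elements. -/

open PowerSeries

namespace Submodule

variable {R M : Type*} [Ring R] [AddCommGroup M] [Module R M] (N K : Submodule R M)

theorem injective_mkQ_comp_subtype_iff :
    Function.Injective (N.mkQ ∘ₗ K.subtype) ↔ Disjoint K N := by
  rw [← LinearMap.ker_eq_bot, LinearMap.ker_comp, ker_mkQ, disjoint_iff_comap_eq_bot]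

noncomputable def quotientRangeMkQCompSubtypeEquiv :
    ((M ⧸ N) ⧸ LinearMap.range (N.mkQ ∘ₗ K.subtype)) ≃ₗ[R] M ⧸ (N ⊔ K) :=
  quotEquivOfEq _ _ (by rw [LinearMap.range_comp, range_subtype]) ≪≫ₗ
    quotientQuotientEquivQuotientSup N K

end Submodule

section MulOnQuotient

variable {R : Type*} [CommRing R]

theorem range_lsmul_quotient (I : Ideal R) (x : R) :
    LinearMap.range (LinearMap.lsmul R (R ⧸ I) x) = Submodule.map I.mkQ (Ideal.span {x}) := by
  ext z
  obtain ⟨h, rfl⟩ := Submodule.mkQ_surjective I z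
  rw [LinearMap.mem_range, Submodule.mkQ_apply, ← Submodule.mkQ_apply, Submodule.mem_map]
  constructor
  · rintro ⟨y, hy⟩
    obtain ⟨a, rfl⟩ := Submodule.mkQ_surjective I y
    exact ⟨x * a, Ideal.mem_span_singleton.mpr (dvd_mul_right x a), hy⟩
  · rintro ⟨y, hy, hyh⟩
    obtain ⟨a, rfl⟩ := Ideal.mem_span_singleton.mp hy
    exact ⟨I.mkQ a, hyh⟩

variable {x g : R} {r : ℕ}

theorem dvd_of_dvd_mul_of_isLeftRegular (hx : IsLeftRegular x)
    (hxg : ∀ a, x ∣ g * a → x ∣ a) {h : R} (hgh : g ∣ x * h) : g ∣ h := by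
  obtain ⟨m, hm⟩ := hgh
  obtain ⟨m', rfl⟩ := hxg m (hm ▸ dvd_mul_right x h)
  exact ⟨m', hx <| show x * h = x * (g * m') by rw [hm]; ring⟩

theorem pow_mul_dvd_mul_iff (hr : r ≤ 1) (hx : IsLeftRegular x)
    (hxg : ∀ a, x ∣ g * a → x ∣ a) {h : R} : x ^ r * g ∣ x * h ↔ g ∣ h := by
  refine ⟨fun hdvd ↦ ?_, fun hgh ↦ ?_⟩
  · obtain rfl | rfl : r = 0 ∨ r = 1 := by omega
    · exact dvd_of_dvd_mul_of_isLeftRegular hx hxg (by simpa using hdvd)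
    · obtain ⟨m, hm⟩ := hdvd
      exact ⟨m, hx <| show x * h = x * (g * m) by rw [hm]; ring⟩
  · calc x ^ r * g ∣ x * g := mul_dvd_mul (by simpa using pow_dvd_pow x hr) dvd_rfl
      _ ∣ x * h := mul_dvd_mul_left x hgh

theorem ker_lsmul_quotient_span_pow_mul (hr : r ≤ 1) (hx : IsLeftRegular x)
    (hxg : ∀ a, x ∣ g * a → x ∣ a) :
    LinearMap.ker (LinearMap.lsmul R (R ⧸ Ideal.span {x ^ r * g}) x) =
      Submodule.map (Ideal.span {x ^ r * g}).mkQ (Ideal.span {g}) := by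
  have hle : Ideal.span {x ^ r * g} ≤ Ideal.span {g} :=
    Ideal.span_singleton_le_span_singleton.mpr (dvd_mul_left g _)
  ext z
  obtain ⟨h, rfl⟩ := Submodule.mkQ_surjective _ z
  rw [LinearMap.mem_ker, LinearMap.lsmul_apply, Submodule.mkQ_apply,
    ← Submodule.Quotient.mk_smul, Submodule.Quotient.mk_eq_zero, smul_eq_mul,
    ← Submodule.mkQ_apply, ← Submodule.mem_comap, Submodule.comap_map_mkQ,
    sup_eq_right.mpr hle, Ideal.mem_span_singleton, Ideal.mem_span_singleton,
    pow_mul_dvd_mul_iff hr hx hxg]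

theorem disjoint_map_mkQ_span_of_pow_mul (hr : r ≤ 1) (hxg : ∀ a, x ∣ g * a → x ∣ a) :
    Disjoint (Submodule.map (Ideal.span {x ^ r * g}).mkQ (Ideal.span {g}))
      (Submodule.map (Ideal.span {x ^ r * g}).mkQ (Ideal.span {x})) := by
  rw [Submodule.disjoint_def]
  rintro _ ⟨_, hg, rfl⟩ hx
  obtain ⟨a, rfl⟩ := Ideal.mem_span_singleton.mp hg
  rw [Submodule.mkQ_apply, Submodule.Quotient.mk_eq_zero, Ideal.mem_span_singleton]
  obtain rfl | rfl : r = 0 ∨ r = 1 := by omega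
  · simp
  · rw [← Submodule.mem_comap, Submodule.comap_map_mkQ, pow_one,
      sup_eq_right.mpr (Ideal.span_singleton_le_span_singleton.mpr (dvd_mul_right x g)),
      Ideal.mem_span_singleton] at hx
    rw [pow_one, mul_comm x g]
    exact mul_dvd_mul_left g (hxg a hx)

end MulOnQuotient

namespace PowerSeries

variable {R : Type*} [CommRing R]

theorem X_dvd_of_X_dvd_mul_left [NoZeroDivisors R] {g a : R⟦X⟧} (hg : constantCoeff g ≠ 0)
    (h : X ∣ g * a) : X ∣ a := by
  rw [X_dvd_iff, map_mul] at *
  exact (mul_eq_zero.mp h).resolve_left hg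

theorem span_X_pair_eq_ker (g : R⟦X⟧) :
    Ideal.span {X, g} =
      RingHom.ker ((Ideal.Quotient.mk (Ideal.span {constantCoeff g})).comp constantCoeff) := by
  rw [← RingHom.comap_ker, Ideal.mk_ker]
  ext a
  rw [Ideal.mem_comap, Ideal.mem_span_singleton, Ideal.mem_span_pair]
  constructor
  · rintro ⟨u, v, rfl⟩
    exact ⟨constantCoeff v, by simp [mul_comm]⟩
  · rintro ⟨t, ht⟩
    obtain ⟨u, hu⟩ : X ∣ a - g * C t := X_dvd_iff.mpr (by simp [ht])
    exact ⟨u, C t, by rw [mul_comm u, ← hu]; ring⟩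

noncomputable def quotientSpanXPairEquiv (g : R⟦X⟧) :
    R⟦X⟧ ⧸ Ideal.span {X, g} ≃+* R ⧸ Ideal.span {constantCoeff g} :=
  (Ideal.quotEquivOfEq (span_X_pair_eq_ker g)).trans
    (RingHom.quotientKerEquivOfSurjective
      ((Ideal.Quotient.mk_surjective).comp constantCoeff_surj))

end PowerSeries

theorem PadicInt.card_quotient_span_singleton {p : ℕ} [Fact p.Prime] {c : ℤ_[p]} (hc : c ≠ 0) :
    Nat.card (ℤ_[p] ⧸ Ideal.span {c}) = p ^ c.valuation := by
  have hspan : Ideal.span {c} = RingHom.ker (toZModPow c.valuation : ℤ_[p] →+* _) := by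
    rw [ker_toZModPow, Ideal.span_singleton_eq_span_singleton]
    exact .symm ⟨unitCoeff hc, by rw [mul_comm]; exact (unitCoeff_spec hc).symm⟩
  rw [Nat.card_congr (Ideal.quotEquivOfEq hspan).toEquiv, Nat.card_congr
    (RingHom.quotientKerEquivOfSurjective (ZMod.ringHom_surjective _)).toEquiv, Nat.card_zmod]

/-- Let `f = T^r * g ∈ Λ = ℤ_[p][[T]]` with `r ∈ {0, 1}` and
`g(0) ≠ 0` (so `T² ∤ f`), and set `X = Λ/(f)`. The natural map from the kernel
of multiplication by `T` on `X` to the coinvariants `X/TX` is injective, and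
its cokernel is a finite group of cardinality `p^(v_p(g(0)))`. -/
theorem truncated_euler_char_eq_norm_inv_constant_term
    (p : ℕ) [Fact p.Prime] (f g : PowerSeries ℤ_[p]) (r : ℕ) (hr : r ≤ 1)
    (hf : f = (PowerSeries.X : PowerSeries ℤ_[p]) ^ r * g)
    (hg0 : PowerSeries.constantCoeff (R := ℤ_[p]) g ≠ 0)
    (φ : (PowerSeries ℤ_[p] ⧸ Ideal.span {f}) →ₗ[PowerSeries ℤ_[p]]
        (PowerSeries ℤ_[p] ⧸ Ideal.span {f}))
    (hφ : φ = LinearMap.lsmul (PowerSeries ℤ_[p]) (PowerSeries ℤ_[p] ⧸ Ideal.span {f})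
        (PowerSeries.X : PowerSeries ℤ_[p]))
    (ψ : LinearMap.ker φ →ₗ[PowerSeries ℤ_[p]]
        ((PowerSeries ℤ_[p] ⧸ Ideal.span {f}) ⧸ LinearMap.range φ))
    (hψ : ψ = (LinearMap.range φ).mkQ.comp (LinearMap.ker φ).subtype) :
    Function.Injective ψ ∧
      Finite (((PowerSeries ℤ_[p] ⧸ Ideal.span {f}) ⧸ LinearMap.range φ) ⧸
        LinearMap.range ψ) ∧
      Nat.card (((PowerSeries ℤ_[p] ⧸ Ideal.span {f}) ⧸ LinearMap.range φ) ⧸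
          LinearMap.range ψ) =
        p ^ PadicInt.valuation (PowerSeries.constantCoeff (R := ℤ_[p]) g) := by
  subst hf
  have hxg := fun a ↦ X_dvd_of_X_dvd_mul_left (a := a) hg0
  have hker : LinearMap.ker φ = _ := hφ ▸ ker_lsmul_quotient_span_pow_mul hr X_mul_injective hxg
  have hrange : LinearMap.range φ = _ := hφ ▸ range_lsmul_quotient _ X
  have hle : Ideal.span {X ^ r * g} ≤ Ideal.span {X, g} := Ideal.span_le.mpr <| by
    simpa using Ideal.mul_mem_left _ _ (Ideal.subset_span (by simp))
  have hcard : Nat.card (((ℤ_[p]⟦X⟧ ⧸ Ideal.span {X ^ r * g}) ⧸ LinearMap.range φ) ⧸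
      LinearMap.range ψ) = p ^ (constantCoeff g).valuation := by
    rw [hψ, Nat.card_congr (Submodule.quotientRangeMkQCompSubtypeEquiv _ _).toEquiv, hrange, hker,
      ← Submodule.map_sup, ← Ideal.span_insert,
      Nat.card_congr (Submodule.quotientQuotientEquivQuotient _ _ hle).toEquiv,
      Nat.card_congr (quotientSpanXPairEquiv g).toEquiv, PadicInt.card_quotient_span_singleton hg0]
  have hfinite := Nat.finite_of_card_ne_zero (hcard ▸ pow_ne_zero _ (Fact.out : p.Prime).ne_zero)
  refine ⟨?_, hfinite, hcard⟩
  rw [hψ, Submodule.injective_mkQ_comp_subtype_iff, hker, hrange]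
  exact disjoint_map_mkQ_span_of_pow_mul hr hxg
end
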